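/- Suppose X = (X_v, X_t) and Z = (Z_v, Z_t) are discrete random variables with conditional law p(z_v, z_t | x_v, x_t) = p(z_v | x_v) · p(z_t | x_v, x_t) (causal attention structure). Then for any factorized prior r(z_v, z_t) = r_v(z_v) r_t(z_t) positive on the support of the marginal of Z, the mutual information satisfies I(Z; X) ≤ E_{x_v}[D_KL(p(·|x_v) || r_v)] + E_{(x_v,x_t)}[D_KL(p(·|x_v,x_t) || r_t)]. -/

import Mathlib

open Finset

noncomputable section

/-- Kullback–Leibler divergence between finite pmfs (natural log). -/
def KLdiv {𝒵 : Type*} [Fintype 𝒵] (p q : 𝒵 → ℝ) : ℝ :=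
  ∑ z, p z * Real.log (p z / q z)

/-- Mutual information of a joint pmf on `α × β` (natural log). -/
def MIjoint {α β : Type*} [Fintype α] [Fintype β] (p : α × β → ℝ) : ℝ :=
  ∑ a, ∑ b, p (a, b) * Real.log (p (a, b) / ((∑ b', p (a, b')) * (∑ a', p (a', b))))

/-!
Write the joint law of `(Z, X)` as `P_X(x) W(z | x)` and let `P_Z` be the output law. For any
`r` with `P_Z ≪ r` one has the "golden formula" `I(Z;X) = E_x D(W(·|x) ‖ r) - D(P_Z ‖ r)`, so
Gibbs' inequality gives `I(Z;X) ≤ E_x D(W(·|x) ‖ r)`. For the causal channel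
`W(z_v, z_t | x) = p(z_v | x_v) p(z_t | x)` and the product prior `r = r_v ⊗ r_t`, the divergence
`D(W(·|x) ‖ r)` splits into `D(p(·|x_v) ‖ r_v) + D(p(·|x) ‖ r_t)`.
-/

theorem sub_le_mul_log_div {p q : ℝ} (hp : 0 ≤ p) (hq : 0 ≤ q) (hpq : 0 < p → 0 < q) :
    p - q ≤ p * Real.log (p / q) := by
  rcases hp.eq_or_lt with rfl | hp
  · simpa using hq
  have hlog := Real.one_sub_inv_le_log_of_pos (div_pos hp (hpq hp))
  calc p - q = p * (1 - (p / q)⁻¹) := by field_simp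
    _ ≤ p * Real.log (p / q) := mul_le_mul_of_nonneg_left hlog hp.le

theorem KLdiv_nonneg {𝒵 : Type*} [Fintype 𝒵] {p q : 𝒵 → ℝ} (hp : ∀ z, 0 ≤ p z)
    (hq : ∀ z, 0 ≤ q z) (hpq : ∀ z, 0 < p z → 0 < q z) (hsum : ∑ z, q z ≤ ∑ z, p z) :
    0 ≤ KLdiv p q := by
  calc (0 : ℝ) ≤ ∑ z, (p z - q z) := by rw [sum_sub_distrib]; linarith
    _ ≤ KLdiv p q := sum_le_sum fun z _ => sub_le_mul_log_div (hp z) (hq z) (hpq z)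

theorem mul_mul_log_div_mul_eq {x w m r : ℝ} (hm : m ≠ 0) (hr : r ≠ 0) :
    x * w * Real.log (x * w / (m * x)) =
      x * (w * Real.log (w / r)) - x * w * Real.log (m / r) := by
  rcases eq_or_ne x 0 with rfl | hx
  · simp
  rcases eq_or_ne w 0 with rfl | hw
  · simp
  have hsplit : Real.log (x * w / (m * x)) = Real.log (w / r) - Real.log (m / r) := by
    rw [← Real.log_div (by positivity) (by positivity)]
    congr 1
    field_simp
  rw [hsplit]
  ring

theorem mul_mul_log_div_mul_div_eq {x y u v : ℝ} (hx : x ≠ 0 → u ≠ 0) (hy : y ≠ 0 → v ≠ 0) :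
    x * y * Real.log (x * y / (u * v)) =
      y * (x * Real.log (x / u)) + x * (y * Real.log (y / v)) := by
  rcases eq_or_ne x 0 with rfl | hx0
  · simp
  rcases eq_or_ne y 0 with rfl | hy0
  · simp
  rw [mul_div_mul_comm, Real.log_mul (div_ne_zero hx0 (hx hx0)) (div_ne_zero hy0 (hy hy0))]
  ring

theorem KLdiv_prod {α β : Type*} [Fintype α] [Fintype β] {p q : α → ℝ} {p' q' : β → ℝ}
    (hp : ∑ a, p a = 1) (hp' : ∑ b, p' b = 1)
    (hpq : ∀ a, p a ≠ 0 → q a ≠ 0) (hpq' : ∀ b, p' b ≠ 0 → q' b ≠ 0) :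
    KLdiv (fun z : α × β => p z.1 * p' z.2) (fun z => q z.1 * q' z.2) =
      KLdiv p q + KLdiv p' q' := by
  simp only [KLdiv, Fintype.sum_prod_type, mul_mul_log_div_mul_div_eq (hpq _) (hpq' _),
    sum_add_distrib, ← sum_mul, ← mul_sum, hp, hp', one_mul]

section Channel

variable {α β : Type*} [Fintype β]

def channelMarginal (π : β → ℝ) (W : β → α → ℝ) (a : α) : ℝ :=
  ∑ b, π b * W b a

theorem channelMarginal_nonneg {π : β → ℝ} {W : β → α → ℝ} (hπ : ∀ b, 0 ≤ π b)
    (hW : ∀ b a, 0 ≤ W b a) (a : α) : 0 ≤ channelMarginal π W a :=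
  sum_nonneg fun b _ => mul_nonneg (hπ b) (hW b a)

theorem channelMarginal_pos {π : β → ℝ} {W : β → α → ℝ} (hπ : ∀ b, 0 ≤ π b)
    (hW : ∀ b a, 0 ≤ W b a) {b : β} {a : α} (hb : 0 < π b) (hba : 0 < W b a) :
    0 < channelMarginal π W a :=
  sum_pos' (fun b _ => mul_nonneg (hπ b) (hW b a)) ⟨b, mem_univ b, mul_pos hb hba⟩

theorem channelMarginal_mono {γ : Type*} {π : β → ℝ} {W : β → α → ℝ} {U : β → γ → ℝ}
    (hπ : ∀ b, 0 ≤ π b) {a : α} {c : γ} (h : ∀ b, W b a ≤ U b c) :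
    channelMarginal π W a ≤ channelMarginal π U c :=
  sum_le_sum fun b _ => mul_le_mul_of_nonneg_left (h b) (hπ b)

theorem sum_channelMarginal [Fintype α] {π : β → ℝ} {W : β → α → ℝ}
    (hW : ∀ b, ∑ a, W b a = 1) : ∑ a, channelMarginal π W a = ∑ b, π b := by
  simp only [channelMarginal]
  rw [sum_comm]
  simp only [← mul_sum, hW, mul_one]

theorem MIjoint_eq_sum_mul_KLdiv_sub_KLdiv [Fintype α] {π : β → ℝ} {W : β → α → ℝ}
    {r : α → ℝ} (hπ : ∀ b, 0 ≤ π b) (hW0 : ∀ b a, 0 ≤ W b a) (hW1 : ∀ b, ∑ a, W b a = 1)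
    (hr : ∀ a, 0 < channelMarginal π W a → 0 < r a) :
    MIjoint (fun ab : α × β => π ab.2 * W ab.2 ab.1) =
      ∑ b, π b * KLdiv (W b) r - KLdiv (channelMarginal π W) r := by
  set m := channelMarginal π W
  have hrow : ∀ a, ∑ b, π b * W b a * Real.log (π b * W b a / (m a * π b)) =
      ∑ b, π b * (W b a * Real.log (W b a / r a)) - m a * Real.log (m a / r a) := by
    intro a
    rcases (channelMarginal_nonneg hπ hW0 a : 0 ≤ m a).eq_or_lt with hm | hm
    · have hzero := (sum_eq_zero_iff_of_nonneg fun b _ => mul_nonneg (hπ b) (hW0 b a)).1 hm.symm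
      simp [← mul_assoc, hzero, show m a = 0 from hm.symm]
    · calc _ = ∑ b, (π b * (W b a * Real.log (W b a / r a)) -
              π b * W b a * Real.log (m a / r a)) :=
            sum_congr rfl fun b _ => mul_mul_log_div_mul_eq hm.ne' (hr a hm).ne'
        _ = _ := by rw [sum_sub_distrib, ← sum_mul]; rfl
  have hcol : ∀ b, ∑ a, π b * W b a = π b := fun b => by rw [← mul_sum, hW1, mul_one]
  calc MIjoint (fun ab : α × β => π ab.2 * W ab.2 ab.1)
      = ∑ a, ∑ b, π b * W b a * Real.log (π b * W b a / (m a * π b)) := by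
        simp only [MIjoint, hcol]; rfl
    _ = _ := by
        rw [sum_congr rfl fun a _ => hrow a, sum_sub_distrib, sum_comm]
        simp only [KLdiv, mul_sum]

theorem MIjoint_le_sum_mul_KLdiv [Fintype α] {π : β → ℝ} {W : β → α → ℝ} {r : α → ℝ}
    (hπ : ∀ b, 0 ≤ π b) (hW0 : ∀ b a, 0 ≤ W b a) (hW1 : ∀ b, ∑ a, W b a = 1)
    (hr0 : ∀ a, 0 ≤ r a) (hr1 : ∑ a, r a ≤ ∑ b, π b)
    (hr : ∀ a, 0 < channelMarginal π W a → 0 < r a) :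
    MIjoint (fun ab : α × β => π ab.2 * W ab.2 ab.1) ≤ ∑ b, π b * KLdiv (W b) r := by
  rw [MIjoint_eq_sum_mul_KLdiv_sub_KLdiv hπ hW0 hW1 hr, sub_le_self_iff]
  exact KLdiv_nonneg (channelMarginal_nonneg hπ hW0) hr0 hr (by rwa [sum_channelMarginal hW1])

end Channel

theorem le_one_of_sum_eq_one {ι : Type*} [Fintype ι] {f : ι → ℝ} (h0 : ∀ i, 0 ≤ f i)
    (h1 : ∑ i, f i = 1) (i : ι) : f i ≤ 1 :=
  h1 ▸ single_le_sum (fun j _ => h0 j) (mem_univ i)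

/-- Modality-decomposed rate bound (Eq. 2 of the paper).  With
`X = (X_v, X_t)`, `Z = (Z_v, Z_t)` and the causal-attention factorization
`p(z_v, z_t | x_v, x_t) = p(z_v|x_v)·p(z_t|x_v,x_t)`, for any factorized prior
`r(z_v,z_t) = r_v(z_v) r_t(z_t)` positive on the support of the marginal of
`Z`, `I(Z;X) ≤ E_{x_v}[D_KL(p(·|x_v) ‖ r_v)] + E_{(x_v,x_t)}[D_KL(p(·|x_v,x_t) ‖ r_t)]`. -/
theorem ib_rate_modality_decomposed_bound
    {𝒳v 𝒳t 𝒵v 𝒵t : Type*} [Fintype 𝒳v] [Fintype 𝒳t] [Fintype 𝒵v] [Fintype 𝒵t]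
    (pX : 𝒳v × 𝒳t → ℝ) (pZv : 𝒳v → 𝒵v → ℝ) (pZt : 𝒳v × 𝒳t → 𝒵t → ℝ)
    (rv : 𝒵v → ℝ) (rt : 𝒵t → ℝ)
    (hpX0 : ∀ x, 0 ≤ pX x) (hpX1 : ∑ x, pX x = 1)
    (hpZv0 : ∀ xv zv, 0 ≤ pZv xv zv) (hpZv1 : ∀ xv, ∑ zv, pZv xv zv = 1)
    (hpZt0 : ∀ x zt, 0 ≤ pZt x zt) (hpZt1 : ∀ x, ∑ zt, pZt x zt = 1)
    (hrv0 : ∀ zv, 0 ≤ rv zv) (hrv1 : ∑ zv, rv zv = 1)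
    (hrt0 : ∀ zt, 0 ≤ rt zt) (hrt1 : ∑ zt, rt zt = 1)
    (hrvpos : ∀ zv, 0 < ∑ x : 𝒳v × 𝒳t, pX x * pZv x.1 zv → 0 < rv zv)
    (hrtpos : ∀ zt, 0 < ∑ x : 𝒳v × 𝒳t, pX x * pZt x zt → 0 < rt zt) :
    MIjoint (fun zx : (𝒵v × 𝒵t) × (𝒳v × 𝒳t) =>
        pX zx.2 * pZv zx.2.1 zx.1.1 * pZt zx.2 zx.1.2)
      ≤ (∑ xv, (∑ xt, pX (xv, xt)) * KLdiv (fun zv => pZv xv zv) rv)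
        + ∑ x : 𝒳v × 𝒳t, pX x * KLdiv (fun zt => pZt x zt) rt := by
  set W : 𝒳v × 𝒳t → 𝒵v × 𝒵t → ℝ := fun x z => pZv x.1 z.1 * pZt x z.2
  set r : 𝒵v × 𝒵t → ℝ := fun z => rv z.1 * rt z.2
  have hW1 : ∀ x, ∑ z, W x z = 1 := fun x => by
    rw [Fintype.sum_prod_type, ← Fintype.sum_mul_sum, hpZv1, hpZt1, one_mul]
  have hr1 : ∑ z, r z ≤ ∑ x, pX x := by
    rw [Fintype.sum_prod_type, ← Fintype.sum_mul_sum, hrv1, hrt1, hpX1, one_mul]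
  have hr : ∀ z, 0 < channelMarginal pX W z → 0 < r z := fun z hz =>
    mul_pos (hrvpos _ (hz.trans_le (channelMarginal_mono hpX0 fun x => mul_le_of_le_one_right
        (hpZv0 _ _) (le_one_of_sum_eq_one (hpZt0 x) (hpZt1 x) _))))
      (hrtpos _ (hz.trans_le (channelMarginal_mono hpX0 fun x => mul_le_of_le_one_left
        (hpZt0 _ _) (le_one_of_sum_eq_one (hpZv0 x.1) (hpZv1 x.1) _))))
  calc MIjoint (fun zx : (𝒵v × 𝒵t) × (𝒳v × 𝒳t) =>
        pX zx.2 * pZv zx.2.1 zx.1.1 * pZt zx.2 zx.1.2)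
      ≤ ∑ x, pX x * KLdiv (W x) r := by
        simp only [mul_assoc]
        exact MIjoint_le_sum_mul_KLdiv hpX0 (fun x z => mul_nonneg (hpZv0 _ _) (hpZt0 _ _)) hW1
          (fun z => mul_nonneg (hrv0 _) (hrt0 _)) hr1 hr
    _ = ∑ x, (pX x * KLdiv (pZv x.1) rv + pX x * KLdiv (pZt x) rt) := by
        refine sum_congr rfl fun x _ => ?_
        rcases (hpX0 x).eq_or_lt with hx | hx
        · simp [← hx]
        rw [KLdiv_prod (hpZv1 x.1) (hpZt1 x), mul_add]
        · exact fun zv hz => (hrvpos zv <| channelMarginal_pos hpX0 (fun x => hpZv0 x.1) hx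
            ((hpZv0 _ _).lt_of_ne' hz)).ne'
        · exact fun zt hz => (hrtpos zt <| channelMarginal_pos hpX0 hpZt0 hx
            ((hpZt0 _ _).lt_of_ne' hz)).ne'
    _ = _ := by
        rw [sum_add_distrib, Fintype.sum_prod_type]
        simp only [sum_mul]
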